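/- With the Bellman recursion V(i,1,y) = min_{y'} l_{iN}(y,y') and V(i,m,y) = min_{i'∈{i+1,...,N-m+1}} min_{y'} (l_{ii'}(y,y') + V(i', m-1, y')), if every l_{ii'}(y,y') is a positive definite quadratic form in (y,y') plus an affine term, then for every i and m with the recursion well-defined, y ↦ V(i,m,y) is the pointwise minimum of a finite set of quadratic polynomials in y, each with positive leading coefficient. -/

import Mathlib

/-
Each transition cost is a positive definite quadratic in `(y, y')`. Adding to it a quadratic
`q_z(y')` with positive leading coefficient keeps it positive definite (the matrix gains a
nonnegative diagonal entry), and minimising a positive definite quadratic in `(y, y')` over `y'`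
leaves a quadratic in `y` whose leading coefficient is the Schur complement `P₀₀ - P₀₁² / P₁₁ > 0`.
If `V i' (m - 1) = min_z q_z`, the minimum over `y'` and the minimum over `(i', z)` commute, so by
induction on `m` every `V i m` is a minimum of finitely many such quadratics.
-/

open Matrix

/-- The value function defined by the Bellman recursion:
`V i 1 y = min_{y'} l i N y y'` and, for `m ≥ 2`,
`V i m y = min_{i < i' ≤ N - m + 1} min_{y'} (l i i' y y' + V i' (m-1) y')`. -/
noncomputable def bellmanV (N : ℕ) (l : ℕ → ℕ → ℝ → ℝ → ℝ) : ℕ → ℕ → ℝ → ℝ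
  | _, 0, _ => 0
  | i, 1, y => sInf {v : ℝ | ∃ y' : ℝ, v = l i N y y'}
  | i, (m + 2), y =>
      sInf {v : ℝ | ∃ i' : ℕ, i < i' ∧ i' ≤ N - (m + 2) + 1 ∧
        ∃ y' : ℝ, v = l i i' y y' + bellmanV N l i' (m + 1) y'}

open Set

def evalQuad (x : ℝ × ℝ × ℝ) (y : ℝ) : ℝ := x.1 * y ^ 2 + x.2.1 * y + x.2.2

def HasMinOfPosQuadratics (A : ℝ → Set ℝ) : Prop :=
  ∃ (S : Finset (ℝ × ℝ × ℝ)) (hS : S.Nonempty), (∀ x ∈ S, 0 < x.1) ∧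
    ∀ y, IsLeast (A y) (S.inf' hS (evalQuad · y))

theorem isLeast_range_evalQuad {c : ℝ} (hc : 0 < c) (d e : ℝ) :
    IsLeast (range (evalQuad (c, d, e))) (e - d ^ 2 / (4 * c)) := by
  have h : ∀ t, evalQuad (c, d, e) t = c * (t + d / (2 * c)) ^ 2 + (e - d ^ 2 / (4 * c)) := by
    intro t
    simp only [evalQuad]
    field_simp
    ring
  refine ⟨⟨-d / (2 * c), by rw [h]; ring⟩, ?_⟩
  rintro _ ⟨t, rfl⟩
  rw [h]
  nlinarith [sq_nonneg (t + d / (2 * c))]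

theorem isLeast_range_add_inf' {ι β α : Type*} [LinearOrder α] [Add α] [AddLeftMono α]
    {S : Finset ι} (hS : S.Nonempty) (c : β → α) (F : ι → β → α) (m : ι → α)
    (hm : ∀ z ∈ S, IsLeast (range fun t => c t + F z t) (m z)) :
    IsLeast (range fun t => c t + S.inf' hS (F · t)) (S.inf' hS m) := by
  have lower : S.inf' hS m ∈ lowerBounds (range fun t => c t + S.inf' hS (F · t)) := by
    rintro _ ⟨t, rfl⟩
    obtain ⟨z, hz, hFz⟩ := S.exists_mem_eq_inf' hS (F · t)
    show _ ≤ c t + _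
    rw [hFz]
    exact (S.inf'_le m hz).trans ((hm z hz).2 ⟨t, rfl⟩)
  refine ⟨?_, lower⟩
  obtain ⟨z, hz, hmz⟩ := S.exists_mem_eq_inf' hS m
  obtain ⟨t, ht : c t + F z t = m z⟩ := (hm z hz).1
  refine ⟨t, le_antisymm ?_ (lower ⟨t, rfl⟩)⟩
  calc c t + S.inf' hS (F · t) ≤ c t + F z t := by gcongr; exact S.inf'_le (F · t) hz
    _ = S.inf' hS m := by rw [ht, hmz]

theorem HasMinOfPosQuadratics.biUnion {ι : Type*} {s : Finset ι} (hs : s.Nonempty)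
    {A : ι → ℝ → Set ℝ} (hA : ∀ i ∈ s, HasMinOfPosQuadratics (A i)) :
    HasMinOfPosQuadratics fun y => ⋃ i ∈ s, A i y := by
  classical
  choose! S hS hpos hleast using hA
  obtain ⟨i₀, hi₀⟩ := hs
  have hT : (s.biUnion S).Nonempty :=
    ⟨_, Finset.mem_biUnion.2 ⟨i₀, hi₀, (hS i₀ hi₀).choose_spec⟩⟩
  have hsub : ∀ i (hi : i ∈ s) y,
      (s.biUnion S).inf' hT (evalQuad · y) ≤ (S i).inf' (hS i hi) (evalQuad · y) :=
    fun i hi y => Finset.inf'_mono _ (Finset.subset_biUnion_of_mem S hi) _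
  refine ⟨s.biUnion S, hT, fun x hx => ?_, fun y => ⟨?_, ?_⟩⟩
  · obtain ⟨i, hi, hx⟩ := Finset.mem_biUnion.1 hx
    exact hpos i hi x hx
  · obtain ⟨x, hx, hmin⟩ := (s.biUnion S).exists_mem_eq_inf' hT (evalQuad · y)
    obtain ⟨i, hi, hxi⟩ := Finset.mem_biUnion.1 hx
    have heq : (S i).inf' (hS i hi) (evalQuad · y) = (s.biUnion S).inf' hT (evalQuad · y) :=
      le_antisymm (hmin ▸ Finset.inf'_le _ hxi) (hsub i hi y)
    exact mem_biUnion hi (heq ▸ (hleast i hi y).1)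
  · simp only [mem_lowerBounds, mem_iUnion]
    rintro v ⟨i, hi, hv⟩
    exact (hsub i hi y).trans ((hleast i hi y).2 hv)

def jointQuad (P : Matrix (Fin 2) (Fin 2) ℝ) (q : Fin 2 → ℝ) (r : ℝ) (y y' : ℝ) : ℝ :=
  ![y, y'] ⬝ᵥ P *ᵥ ![y, y'] + q ⬝ᵥ ![y, y'] + r

/-- Coefficients of `y ↦ min_{y'} jointQuad P q r y y'`. -/
noncomputable def partialMinCoeffs (P : Matrix (Fin 2) (Fin 2) ℝ) (q : Fin 2 → ℝ) (r : ℝ) :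
    ℝ × ℝ × ℝ :=
  (P 0 0 - P 0 1 ^ 2 / P 1 1, q 0 - P 0 1 * q 1 / P 1 1, r - q 1 ^ 2 / (4 * P 1 1))

section

variable {P : Matrix (Fin 2) (Fin 2) ℝ}

theorem jointQuad_eq_evalQuad (hP : P.IsHermitian) (q : Fin 2 → ℝ) (r y y' : ℝ) :
    jointQuad P q r y y' =
      evalQuad (P 1 1, 2 * P 0 1 * y + q 1, P 0 0 * y ^ 2 + q 0 * y + r) y' := by
  have hsym : P 1 0 = P 0 1 := hP.apply 0 1
  simp only [jointQuad, evalQuad, dotProduct, mulVec, Fin.sum_univ_two, cons_val_zero,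
    cons_val_one, cons_val_fin_one, hsym]
  ring

theorem jointQuad_add_evalQuad (q : Fin 2 → ℝ) (r : ℝ) (z : ℝ × ℝ × ℝ) (y y' : ℝ) :
    jointQuad P q r y y' + evalQuad z y' =
      jointQuad (P + Matrix.diagonal ![0, z.1]) (q + ![0, z.2.1]) (r + z.2.2) y y' := by
  simp only [jointQuad, evalQuad, dotProduct, mulVec, Fin.sum_univ_two, cons_val_zero,
    cons_val_one, cons_val_fin_one, Matrix.diagonal, Matrix.add_apply, of_apply, Pi.add_apply,
    Fin.isValue, ↓reduceIte, add_zero, zero_ne_one, one_ne_zero]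
  ring

theorem partialMinCoeffs_fst_pos (hP : P.PosDef) (q : Fin 2 → ℝ) (r : ℝ) :
    0 < (partialMinCoeffs P q r).1 := by
  have hc : 0 < P 1 1 := hP.diag_pos
  have hdet := hP.det_pos
  have hsym : P 1 0 = P 0 1 := hP.isHermitian.apply 0 1
  rw [det_fin_two, hsym] at hdet
  simp only [partialMinCoeffs]
  rw [sub_pos, div_lt_iff₀ hc]
  nlinarith

theorem isLeast_range_jointQuad (hP : P.PosDef) (q : Fin 2 → ℝ) (r y : ℝ) :
    IsLeast (range (jointQuad P q r y)) (evalQuad (partialMinCoeffs P q r) y) := by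
  have hc : 0 < P 1 1 := hP.diag_pos
  convert isLeast_range_evalQuad hc (2 * P 0 1 * y + q 1) (P 0 0 * y ^ 2 + q 0 * y + r) using 1
  · exact congrArg range (funext (jointQuad_eq_evalQuad hP.isHermitian q r y))
  · simp only [evalQuad, partialMinCoeffs]
    field_simp
    ring

theorem HasMinOfPosQuadratics.exists_sInf_eq {A : ℝ → Set ℝ} (h : HasMinOfPosQuadratics A) :
    ∃ (S : Finset (ℝ × ℝ × ℝ)) (hS : S.Nonempty), (∀ x ∈ S, 0 < x.1) ∧
      ∀ y, sInf (A y) = S.inf' hS (evalQuad · y) :=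
  let ⟨S, hS, hpos, hleast⟩ := h
  ⟨S, hS, hpos, fun y => (hleast y).csInf_eq⟩

theorem hasMinOfPosQuadratics_range_jointQuad (hP : P.PosDef) (q : Fin 2 → ℝ) (r : ℝ) :
    HasMinOfPosQuadratics fun y => range (jointQuad P q r y) :=
  ⟨{partialMinCoeffs P q r}, Finset.singleton_nonempty _,
    by simpa using partialMinCoeffs_fst_pos hP q r,
    fun y => by simpa using isLeast_range_jointQuad hP q r y⟩

theorem hasMinOfPosQuadratics_range_jointQuad_add (hP : P.PosDef) (q : Fin 2 → ℝ) (r : ℝ)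
    {S : Finset (ℝ × ℝ × ℝ)} (hS : S.Nonempty) (hpos : ∀ x ∈ S, 0 < x.1) :
    HasMinOfPosQuadratics fun y =>
      range fun y' => jointQuad P q r y y' + S.inf' hS (evalQuad · y') := by
  classical
  have hPz : ∀ z ∈ S, (P + Matrix.diagonal ![0, z.1]).PosDef := fun z hz =>
    hP.add_posSemidef (PosSemidef.diagonal fun j => by fin_cases j <;> simp [(hpos z hz).le])
  let g : ℝ × ℝ × ℝ → ℝ × ℝ × ℝ := fun z =>
    partialMinCoeffs (P + Matrix.diagonal ![0, z.1]) (q + ![0, z.2.1]) (r + z.2.2)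
  refine ⟨S.image g, hS.image g, ?_, fun y => ?_⟩
  · simpa only [Finset.forall_mem_image] using fun z hz => partialMinCoeffs_fst_pos (hPz z hz) _ _
  · rw [Finset.inf'_image]
    refine isLeast_range_add_inf' hS _ _ _ fun z hz => ?_
    simp only [jointQuad_add_evalQuad]
    exact isLeast_range_jointQuad (hPz z hz) _ _ y

end

theorem bellmanV_one (N : ℕ) (l : ℕ → ℕ → ℝ → ℝ → ℝ) (i : ℕ) (y : ℝ) :
    bellmanV N l i 1 y = sInf (range (l i N y)) := by
  simp only [bellmanV, range, eq_comm]

theorem bellmanV_add_two (N : ℕ) (l : ℕ → ℕ → ℝ → ℝ → ℝ) (i m : ℕ) (y : ℝ) :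
    bellmanV N l i (m + 2) y = sInf (⋃ i' ∈ Finset.Ioc i (N - (m + 2) + 1),
      range fun y' => l i i' y y' + bellmanV N l i' (m + 1) y') := by
  rw [bellmanV]
  congr 1
  ext v
  simp [eq_comm, and_assoc]

theorem stmt_13_general (N : ℕ) (l : ℕ → ℕ → ℝ → ℝ → ℝ)
    (hquad : ∀ i i' : ℕ, i < i' → i' ≤ N →
      ∃ (P : Matrix (Fin 2) (Fin 2) ℝ) (q : Fin 2 → ℝ) (r : ℝ), P.PosDef ∧
        ∀ y y' : ℝ, l i i' y y' = ![y, y'] ⬝ᵥ P *ᵥ ![y, y'] + q ⬝ᵥ ![y, y'] + r) :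
    ∀ i m : ℕ, 1 ≤ m → i + m ≤ N →
      ∃ (S : Finset (ℝ × ℝ × ℝ)) (hS : S.Nonempty),
        (∀ x ∈ S, 0 < x.1) ∧
        ∀ y : ℝ, bellmanV N l i m y =
          S.inf' hS fun x => x.1 * y ^ 2 + x.2.1 * y + x.2.2 := by
  have hl : ∀ i i', i < i' → i' ≤ N → ∃ P q r, P.PosDef ∧ l i i' = jointQuad P q r :=
    fun i i' hi hi' => (hquad i i' hi hi').imp fun P ⟨q, r, hP, h⟩ =>
      ⟨q, r, hP, funext fun y => funext (h y)⟩
  intro i m hm hle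
  obtain ⟨k, rfl⟩ := Nat.exists_eq_add_of_le' hm
  induction k generalizing i with
  | zero =>
    obtain ⟨P, q, r, hP, hlP⟩ := hl i N (by omega) le_rfl
    simp only [zero_add, bellmanV_one]
    rw [hlP]
    exact (hasMinOfPosQuadratics_range_jointQuad hP q r).exists_sInf_eq
  | succ k ih =>
    simp only [bellmanV_add_two]
    refine (HasMinOfPosQuadratics.biUnion (Finset.nonempty_Ioc.2 (by omega))
      fun i' hi' => ?_).exists_sInf_eq
    obtain ⟨hii', hi'N⟩ := Finset.mem_Ioc.1 hi'
    obtain ⟨P, q, r, hP, hlP⟩ := hl i i' hii' (by omega)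
    obtain ⟨S, hS, hpos, hV⟩ := ih i' (by omega) (by omega)
    rw [hlP, show bellmanV N l i' (k + 1) = _ from funext hV]
    exact hasMinOfPosQuadratics_range_jointQuad_add hP q r hS hpos

/-- If every transition cost is a positive definite quadratic form plus affine
terms, then every value function `y ↦ V i m y` is the pointwise minimum of a
finite nonempty family of quadratic polynomials with positive leading
coefficients. -/
theorem stmt_13 (N : ℕ) (hN : 0 < N) (l : ℕ → ℕ → ℝ → ℝ → ℝ)
    (hquad : ∀ i i' : ℕ, i < i' → i' ≤ N →
      ∃ (P : Matrix (Fin 2) (Fin 2) ℝ) (q : Fin 2 → ℝ) (r : ℝ), P.PosDef ∧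
        ∀ y y' : ℝ, l i i' y y' = ![y, y'] ⬝ᵥ P *ᵥ ![y, y'] + q ⬝ᵥ ![y, y'] + r) :
    ∀ i m : ℕ, 1 ≤ m → i + m ≤ N →
      ∃ (S : Finset (ℝ × ℝ × ℝ)) (hS : S.Nonempty),
        (∀ x ∈ S, 0 < x.1) ∧
        ∀ y : ℝ, bellmanV N l i m y =
          S.inf' hS fun x => x.1 * y ^ 2 + x.2.1 * y + x.2.2 :=
  stmt_13_general N l hquad
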